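/- arXiv:2409.14825 — 2 statements merged into one kernel-verified Lean document; each statement's English description precedes it below -/
import Mathlib

section
/- Let Φ be an N×N complex matrix that factors as Φ = -M∘M† for some linear operator M from a Hilbert space H to ℂ^N (with M† its adjoint). Then Φ is Hermitian and negative semi-definite, and det(I + Φ·Φ̄) ≥ 1 > 0, where Φ̄ denotes entrywise complex conjugation. -/
/-!
Writing `vⱼ = M† eⱼ`, the entries of `M M†` are `⟪vⱼ, vₖ⟫`, so `-Φ` is the Gram matrix of the
`vⱼ` and hence positive semidefinite; its entrywise conjugate is its transpose, so it is
positive semidefinite as well. For positive semidefinite `A = C† C` and `B`, Sylvester's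
determinant identity gives `det (1 + A B) = det (1 + C B C†)`, and `C B C†` is positive
semidefinite, so this determinant is the product of the numbers `1 + λᵢ ≥ 1` over its
eigenvalues `λᵢ ≥ 0`.
-/

open ContinuousLinearMap Matrix
open scoped ComplexOrder InnerProductSpace

namespace Matrix

variable {n 𝕜 : Type*} [RCLike 𝕜]

lemma PosSemidef.map_starRingEnd {A : Matrix n n 𝕜} (hA : A.PosSemidef) :
    (A.map (starRingEnd 𝕜)).PosSemidef :=
  hA.conjTranspose.transpose

variable [Fintype n] [DecidableEq n]

lemma IsHermitian.det_cfc {A : Matrix n n 𝕜} (hA : A.IsHermitian) (f : ℝ → ℝ) :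
    (cfc f A).det = ∏ i, (f (hA.eigenvalues i) : 𝕜) := by
  simp [hA.cfc_eq, IsHermitian.cfc, -Unitary.conjStarAlgAut_apply]

lemma PosSemidef.one_le_det_one_add {P : Matrix n n 𝕜} (hP : P.PosSemidef) :
    1 ≤ (1 + P).det := by
  have hcfc : cfc (fun x : ℝ => 1 + x) P = 1 + P := by
    refine (cfc_const_add (1 : ℝ) (fun x => x) P (ha := hP.1)).trans ?_
    rw [cfc_id' ℝ P (ha := hP.1), map_one]
  rw [← hcfc, hP.1.det_cfc]
  exact_mod_cast Finset.one_le_prod fun i _ => le_add_of_nonneg_right (hP.eigenvalues_nonneg i)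

open scoped MatrixOrder in
lemma PosSemidef.one_le_det_one_add_mul {A B : Matrix n n 𝕜} (hA : A.PosSemidef)
    (hB : B.PosSemidef) : 1 ≤ (1 + A * B).det := by
  obtain ⟨C, rfl⟩ := CStarAlgebra.nonneg_iff_eq_star_mul_self.mp hA.nonneg
  rw [star_eq_conjTranspose, Matrix.mul_assoc, det_one_add_mul_comm]
  exact (hB.mul_mul_conjTranspose_same C).one_le_det_one_add

end Matrix

lemma ContinuousLinearMap.apply_adjoint_single_apply {𝕜 H ι : Type*} [RCLike 𝕜]
    [NormedAddCommGroup H] [InnerProductSpace 𝕜 H] [CompleteSpace H] [Fintype ι] [DecidableEq ι]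
    (M : H →L[𝕜] EuclideanSpace 𝕜 ι) (j k : ι) :
    M (adjoint M (EuclideanSpace.single k 1)) j =
      ⟪adjoint M (EuclideanSpace.single j 1), adjoint M (EuclideanSpace.single k 1)⟫_𝕜 := by
  rw [adjoint_inner_left, EuclideanSpace.inner_single_left, map_one, one_mul]

/-- Let `Φ` be an `N×N` complex matrix that factors as `Φ = -M∘M†` for a
bounded linear operator `M : H → ℂ^N` on a complex Hilbert space `H` (with `M†` its adjoint).
Then `Φ` is Hermitian and negative semi-definite, and `det(I + Φ·Φ̄) ≥ 1 > 0`, where `Φ̄` is the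
entrywise complex conjugate of `Φ`. -/
theorem stmt0 {H : Type*} [NormedAddCommGroup H] [InnerProductSpace ℂ H] [CompleteSpace H]
    {N : ℕ} (M : H →L[ℂ] EuclideanSpace ℂ (Fin N))
    (Φ : Matrix (Fin N) (Fin N) ℂ)
    (hΦ : ∀ j k, Φ j k =
      -(M ((ContinuousLinearMap.adjoint M) (EuclideanSpace.single k (1 : ℂ)))) j) :
    Φ.IsHermitian ∧ (-Φ).PosSemidef ∧
      ∃ r : ℝ, 1 ≤ r ∧ (1 + Φ * Φ.map (starRingEnd ℂ)).det = (r : ℂ) := by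
  set v : Fin N → H := fun j => adjoint M (EuclideanSpace.single j 1)
  have hΦv : Φ = -gram ℂ v := by
    ext j k
    rw [hΦ, apply_adjoint_single_apply]
    rfl
  have hG := posSemidef_gram ℂ v
  subst hΦv
  refine ⟨hG.1.neg, by rwa [neg_neg], ?_⟩
  have hdet := hG.one_le_det_one_add_mul hG.map_starRingEnd
  rw [Matrix.map_neg _ (map_neg _), neg_mul_neg]
  exact ⟨_, (Complex.le_def.mp hdet).1, Complex.eq_re_of_ofReal_le (by exact_mod_cast hdet)⟩
end

section
/- Let R(z) = (z² + α₁²)(z² + α₂²) with 0 < α₁ < α₂, and let √R(z) be the branch analytic on ℂ \ ([iα₁,iα₂] ∪ [-iα₂,-iα₁]) with √R(z) ~ z² as z → ∞ and positive on (-iα₁, iα₁), the segment of the imaginary axis between the cuts. Define κ = -(∫_{-iα₁}^{iα₁} ζ²dζ/√R(ζ))/(∫_{-iα₁}^{iα₁} dζ/√R(ζ)). Then κ is real, and κ = α₂²(1 - E(m₁)/K(m₁)) where m₁ = α₁²/α₂², and K, E are the complete elliptic integrals of the first and second kind. -/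
noncomputable section
open Complex intervalIntegral MeasureTheory

/-- The complete elliptic integral of the first kind,
`K(m) = ∫₀¹ ds/(√(1-s²)√(1-ms²))`. -/
def ellipticK (m : ℝ) : ℝ :=
  ∫ s in (0:ℝ)..1, 1 / (Real.sqrt (1 - s ^ 2) * Real.sqrt (1 - m * s ^ 2))

/-- The complete elliptic integral of the second kind,
`E(m) = ∫₀¹ √((1-ms²)/(1-s²)) ds`. -/
def ellipticE (m : ℝ) : ℝ :=
  ∫ s in (0:ℝ)..1, Real.sqrt ((1 - m * s ^ 2) / (1 - s ^ 2))


/-- abbreviated integrand -/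
noncomputable def gg (m s : ℝ) : ℝ := (Real.sqrt (1 - s ^ 2) * Real.sqrt (1 - m * s ^ 2))⁻¹

lemma gg_int01 {m : ℝ} (hm0 : 0 ≤ m) (hm1 : m < 1) :
    IntervalIntegrable (gg m) volume 0 1 := by
  have hbase : IntervalIntegrable (fun x : ℝ => x ^ (-(1/2) : ℝ)) volume 0 1 :=
    intervalIntegrable_rpow' (by norm_num)
  have hcomp : IntervalIntegrable (fun s : ℝ => (1 - s) ^ (-(1/2) : ℝ)) volume 0 1 := by
    have := hbase.comp_sub_left 1
    simpa using this.symm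
  have hG : IntervalIntegrable
      (fun s : ℝ => (Real.sqrt (1 - m))⁻¹ * (1 - s) ^ (-(1/2) : ℝ)) volume 0 1 :=
    hcomp.const_mul _
  apply hG.mono_fun'
  · apply Measurable.aestronglyMeasurable
    unfold gg; fun_prop
  · filter_upwards [ae_restrict_mem measurableSet_uIoc] with s hs
    rw [Set.uIoc_of_le (by norm_num : (0:ℝ) ≤ 1)] at hs
    obtain ⟨hs0, hs1⟩ := hs
    have h1m : 0 < 1 - m := by linarith
    rcases eq_or_lt_of_le hs1 with rfl | hs1'
    · simp [gg, Real.norm_eq_abs]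
    · have hu : 0 < 1 - s := by linarith
      have hss : s ^ 2 < 1 := by nlinarith
      have hms : m * s ^ 2 < 1 := by nlinarith
      have h2 : Real.sqrt (1 - s) ≤ Real.sqrt (1 - s ^ 2) := by
        apply Real.sqrt_le_sqrt; nlinarith
      have h3 : Real.sqrt (1 - m) ≤ Real.sqrt (1 - m * s ^ 2) := by
        apply Real.sqrt_le_sqrt; nlinarith
      have hp1 : 0 < Real.sqrt (1 - s) := Real.sqrt_pos.2 hu
      have hp2 : 0 < Real.sqrt (1 - m) := Real.sqrt_pos.2 h1m
      have hrw : (1 - s) ^ (-(1/2) : ℝ) = (Real.sqrt (1 - s))⁻¹ := by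
        rw [Real.rpow_neg hu.le, Real.sqrt_eq_rpow]
      rw [Real.norm_eq_abs, gg, _root_.abs_of_nonneg (by positivity), hrw, mul_inv, mul_comm]
      have := mul_le_mul (inv_anti₀ hp2 h3) (inv_anti₀ hp1 h2)
        (by positivity) (by positivity)
      exact this

lemma gg_even (m s : ℝ) : gg m (-s) = gg m s := by simp [gg]

lemma gg_int (m : ℝ) (hm0 : 0 ≤ m) (hm1 : m < 1) :
    IntervalIntegrable (gg m) volume (-1) 1 := by
  have h01 := gg_int01 hm0 hm1
  have hneg : IntervalIntegrable (gg m) volume (-1) 0 := by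
    have h2 := (IntervalIntegrable.iff_comp_neg (f := gg m) (a := 1) (b := 0)).mp h01.symm
    simp only [gg_even] at h2
    simpa using h2
  exact hneg.trans h01

lemma hh_int {m a b : ℝ} (ha : -1 ≤ a) (hb : b ≤ 1) (hab : a ≤ b)
    (hm0 : 0 ≤ m) (hm1 : m < 1) :
    IntervalIntegrable (fun s => s ^ 2 * gg m s) volume a b := by
  have hg : IntervalIntegrable (gg m) volume a b := by
    apply (gg_int m hm0 hm1).mono_set
    rw [Set.uIcc_of_le hab, Set.uIcc_of_le (by norm_num : (-1:ℝ) ≤ 1)]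
    exact Set.Icc_subset_Icc ha hb
  apply hg.mono_fun'
  · apply Measurable.aestronglyMeasurable
    unfold gg; fun_prop
  · filter_upwards [ae_restrict_mem measurableSet_uIoc] with s hs
    rw [Set.uIoc_of_le hab] at hs
    have h1 : s ^ 2 ≤ 1 := by nlinarith [hs.1, hs.2]
    have h2 : 0 ≤ gg m s := by unfold gg; positivity
    rw [Real.norm_eq_abs, _root_.abs_of_nonneg (by positivity)]
    nlinarith

lemma gg_pos {m s : ℝ} (hm0 : 0 ≤ m) (hm1 : m < 1) (hs : s ∈ Set.Ioo (0:ℝ) 1) :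
    0 < gg m s := by
  obtain ⟨hs0, hs1⟩ := hs
  have h1 : 0 < 1 - s ^ 2 := by nlinarith
  have h2 : 0 < 1 - m * s ^ 2 := by nlinarith
  unfold gg
  positivity

lemma K_pos {m : ℝ} (hm0 : 0 ≤ m) (hm1 : m < 1) : 0 < ∫ s in (0:ℝ)..1, gg m s := by
  apply intervalIntegral_pos_of_pos_on (gg_int01 hm0 hm1)
  · exact fun s hs => gg_pos hm0 hm1 hs
  · norm_num

lemma int_even {f : ℝ → ℝ} (hf : ∀ s, f (-s) = f s)
    (h1 : IntervalIntegrable f volume (-1) 0) (h2 : IntervalIntegrable f volume 0 1) :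
    ∫ s in (-1:ℝ)..1, f s = 2 * ∫ s in (0:ℝ)..1, f s := by
  have hneg : ∫ s in (-1:ℝ)..0, f s = ∫ s in (0:ℝ)..1, f s := by
    have h3 := intervalIntegral.integral_comp_neg (a := 0) (b := 1) f
    simp only [hf] at h3
    simpa using h3.symm
  rw [← intervalIntegral.integral_add_adjacent_intervals h1 h2, hneg]; ring

lemma E_eq {m : ℝ} (hm0 : 0 ≤ m) (hm1 : m < 1) :
    (∫ s in (0:ℝ)..1, Real.sqrt ((1 - m * s ^ 2) / (1 - s ^ 2)))
      = (∫ s in (0:ℝ)..1, gg m s) - m * ∫ s in (0:ℝ)..1, s ^ 2 * gg m s := by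
  have hcongr : ∀ s ∈ Set.uIcc (0:ℝ) 1,
      Real.sqrt ((1 - m * s ^ 2) / (1 - s ^ 2)) = gg m s - m * (s ^ 2 * gg m s) := by
    intro s hs
    rw [Set.uIcc_of_le (by norm_num : (0:ℝ) ≤ 1)] at hs
    obtain ⟨hs0, hs1⟩ := hs
    rcases eq_or_lt_of_le hs1 with rfl | hs1'
    · simp [gg]
    · have hb : 0 < 1 - s ^ 2 := by nlinarith
      have ha : 0 < 1 - m * s ^ 2 := by nlinarith
      have hsb : (0:ℝ) < Real.sqrt (1 - s ^ 2) := Real.sqrt_pos.2 hb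
      have hsa : (0:ℝ) < Real.sqrt (1 - m * s ^ 2) := Real.sqrt_pos.2 ha
      have e1 : Real.sqrt (1 - m * s ^ 2) * Real.sqrt (1 - m * s ^ 2) = 1 - m * s ^ 2 :=
        Real.mul_self_sqrt ha.le
      rw [Real.sqrt_div ha.le]
      have key : gg m s - m * (s ^ 2 * gg m s) = (1 - m * s ^ 2) * gg m s := by ring
      rw [key]
      unfold gg
      rw [mul_inv]
      field_simp
      nlinarith [e1]
  rw [intervalIntegral.integral_congr hcongr,
    intervalIntegral.integral_sub (gg_int01 hm0 hm1)
      ((hh_int (by norm_num) le_rfl (by norm_num) hm0 hm1).const_mul m),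
    intervalIntegral.integral_const_mul]

lemma r_eq {α₁ α₂ s : ℝ} (h1 : 0 < α₁) (h12 : α₁ < α₂) (hs : s ∈ Set.Icc (-1:ℝ) 1) :
    Real.sqrt ((α₁ ^ 2 - (α₁ * s) ^ 2) * (α₂ ^ 2 - (α₁ * s) ^ 2))
      = (α₁ * α₂) * (Real.sqrt (1 - s ^ 2) * Real.sqrt (1 - α₁ ^ 2 / α₂ ^ 2 * s ^ 2)) := by
  have h2 : (0:ℝ) < α₂ := h1.trans h12
  have e : (α₁ ^ 2 - (α₁ * s) ^ 2) * (α₂ ^ 2 - (α₁ * s) ^ 2)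
      = (α₁ ^ 2 * (1 - s ^ 2)) * (α₂ ^ 2 * (1 - α₁ ^ 2 / α₂ ^ 2 * s ^ 2)) := by
    field_simp
  have hu : (0:ℝ) ≤ 1 - s ^ 2 := by nlinarith [hs.1, hs.2]
  rw [e, Real.sqrt_mul (by positivity), Real.sqrt_mul (by positivity : (0:ℝ) ≤ α₁ ^ 2),
    Real.sqrt_mul (by positivity : (0:ℝ) ≤ α₂ ^ 2), Real.sqrt_sq h1.le, Real.sqrt_sq h2.le]
  ring

/-- With `R(z) = (z²+α₁²)(z²+α₂²)`, `0 < α₁ < α₂`, and the branch of `√R`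
positive on the segment of the imaginary axis between the cuts, the constant
`κ = -(∫_{-iα₁}^{iα₁} ζ²dζ/√R(ζ))/(∫_{-iα₁}^{iα₁} dζ/√R(ζ))` (integrals along the imaginary
segment, parametrized by `ζ = iy`) is real and equals `α₂²(1 - E(m₁)/K(m₁))` with
`m₁ = α₁²/α₂²`. -/
theorem stmt7 (α₁ α₂ : ℝ) (h1 : 0 < α₁) (h12 : α₁ < α₂)
    (sqrtR : ℂ → ℂ)
    (hsqrtR : ∀ y ∈ Set.Icc (-α₁) α₁,
      sqrtR (Complex.I * y) = (Real.sqrt ((α₁ ^ 2 - y ^ 2) * (α₂ ^ 2 - y ^ 2)) : ℂ))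
    (κ : ℂ)
    (hκ : κ = -(∫ y in (-α₁)..α₁, (Complex.I * (y : ℂ)) ^ 2 * Complex.I /
        sqrtR (Complex.I * y)) /
      (∫ y in (-α₁)..α₁, Complex.I / sqrtR (Complex.I * y))) :
    κ.im = 0 ∧
      κ = ((α₂ ^ 2 * (1 - ellipticE (α₁ ^ 2 / α₂ ^ 2) / ellipticK (α₁ ^ 2 / α₂ ^ 2)) : ℝ) : ℂ) := by
  have h2 : (0:ℝ) < α₂ := h1.trans h12
  set m : ℝ := α₁ ^ 2 / α₂ ^ 2 with hm_def
  have hm0 : 0 < m := by positivity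
  have hm1 : m < 1 := by
    rw [hm_def, div_lt_one (by positivity)]; nlinarith
  set r : ℝ → ℝ := fun y => Real.sqrt ((α₁ ^ 2 - y ^ 2) * (α₂ ^ 2 - y ^ 2)) with hr_def
  set K : ℝ := ellipticK m with hK_def
  set E : ℝ := ellipticE m with hE_def
  have hKg : K = ∫ s in (0:ℝ)..1, gg m s := by
    rw [hK_def, ellipticK]; congr 1; funext s; rw [gg, one_div]
  have hKpos : 0 < K := by rw [hKg]; exact K_pos hm0.le hm1
  have hEg : E = K - m * ∫ s in (0:ℝ)..1, s ^ 2 * gg m s := by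
    rw [hE_def, ellipticE, hKg]; exact E_eq hm0.le hm1
  set T : ℝ := ∫ s in (0:ℝ)..1, s ^ 2 * gg m s with hT_def
  -- J₁
  set J₁ : ℝ := ∫ y in (-α₁)..α₁, (r y)⁻¹ with hJ₁_def
  set J₂ : ℝ := ∫ y in (-α₁)..α₁, y ^ 2 * (r y)⁻¹ with hJ₂_def
  have hsub : ∀ F : ℝ → ℝ, (∫ y in (-α₁)..α₁, F y) = α₁ * ∫ s in (-1:ℝ)..1, F (α₁ * s) := by
    intro F
    rw [intervalIntegral.integral_comp_mul_left F h1.ne']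
    simp only [smul_eq_mul, mul_neg_one, mul_one]
    rw [← mul_assoc, mul_inv_cancel₀ h1.ne', one_mul]
  have hJ₁ : J₁ = 2 * K / α₂ := by
    rw [hJ₁_def, hsub]
    have hc : Set.EqOn (fun s => (r (α₁ * s))⁻¹) (fun s => (α₁ * α₂)⁻¹ * gg m s)
        (Set.uIcc (-1:ℝ) 1) := by
      intro s hs
      rw [Set.uIcc_of_le (by norm_num : (-1:ℝ) ≤ 1)] at hs
      simp only [hr_def]
      rw [r_eq h1 h12 hs, mul_inv, gg]
    rw [intervalIntegral.integral_congr hc, intervalIntegral.integral_const_mul,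
      int_even (gg_even m) ((gg_int m hm0.le hm1).mono_set (by
        rw [Set.uIcc_of_le (by norm_num : (-1:ℝ) ≤ 0), Set.uIcc_of_le (by norm_num : (-1:ℝ) ≤ 1)]
        exact Set.Icc_subset_Icc le_rfl (by norm_num)))
      (gg_int01 hm0.le hm1), ← hKg]
    field_simp
  have hJ₂ : J₂ = 2 * α₂ * (K - E) := by
    rw [hJ₂_def, hsub]
    have hc : Set.EqOn (fun s => (α₁ * s) ^ 2 * (r (α₁ * s))⁻¹)
        (fun s => (α₁ ^ 2 * (α₁ * α₂)⁻¹) * (s ^ 2 * gg m s)) (Set.uIcc (-1:ℝ) 1) := by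
      intro s hs
      rw [Set.uIcc_of_le (by norm_num : (-1:ℝ) ≤ 1)] at hs
      simp only [hr_def]
      rw [r_eq h1 h12 hs, mul_inv, gg]
      ring
    rw [intervalIntegral.integral_congr hc, intervalIntegral.integral_const_mul,
      int_even (fun s => by rw [neg_pow, gg_even]; ring)
        (hh_int le_rfl (by norm_num) (by norm_num) hm0.le hm1)
        (hh_int (by norm_num) le_rfl (by norm_num) hm0.le hm1), ← hT_def]
    have hT : T = (K - E) / m := by rw [hEg]; field_simp; ring
    rw [hT, hm_def]
    field_simp
  -- complex integrals
  have hIcc : ∀ y ∈ Set.uIcc (-α₁) α₁, y ∈ Set.Icc (-α₁) α₁ := by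
    intro y hy
    rwa [Set.uIcc_of_le (by linarith : -α₁ ≤ α₁)] at hy
  have hB : (∫ y in (-α₁)..α₁, Complex.I / sqrtR (Complex.I * y)) = Complex.I * (J₁ : ℂ) := by
    have hc : Set.EqOn (fun y : ℝ => Complex.I / sqrtR (Complex.I * y))
        (fun y : ℝ => Complex.I * (((r y)⁻¹ : ℝ) : ℂ)) (Set.uIcc (-α₁) α₁) := by
      intro y hy
      simp only
      rw [hsqrtR y (hIcc y hy), div_eq_mul_inv, ← Complex.ofReal_inv]
    rw [intervalIntegral.integral_congr hc, intervalIntegral.integral_const_mul,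
      intervalIntegral.integral_ofReal, ← hJ₁_def]
  have hA : (∫ y in (-α₁)..α₁, (Complex.I * (y : ℂ)) ^ 2 * Complex.I / sqrtR (Complex.I * y))
      = -Complex.I * (J₂ : ℂ) := by
    have hc : Set.EqOn (fun y : ℝ => (Complex.I * (y : ℂ)) ^ 2 * Complex.I / sqrtR (Complex.I * y))
        (fun y : ℝ => -Complex.I * ((y ^ 2 * (r y)⁻¹ : ℝ) : ℂ)) (Set.uIcc (-α₁) α₁) := by
      intro y hy
      simp only
      rw [hsqrtR y (hIcc y hy), div_eq_mul_inv, ← Complex.ofReal_inv]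
      push_cast
      linear_combination (Complex.I * (y:ℂ) ^ 2 * (((r y : ℝ) : ℂ))⁻¹) * Complex.I_sq
    rw [intervalIntegral.integral_congr hc, intervalIntegral.integral_const_mul,
      intervalIntegral.integral_ofReal, ← hJ₂_def]
  have hκ' : κ = ((J₂ / J₁ : ℝ) : ℂ) := by
    rw [hκ, hA, hB, Complex.ofReal_div]
    rw [neg_mul, neg_neg]
    exact mul_div_mul_left _ _ Complex.I_ne_zero
  have hreal : J₂ / J₁ = α₂ ^ 2 * (1 - E / K) := by
    rw [hJ₁, hJ₂]
    field_simp
  constructor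
  · rw [hκ']; exact Complex.ofReal_im _
  · rw [hκ', hreal]

end
end
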